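/- arXiv:math/0701364 — 2 statements merged into one kernel-verified Lean document; each statement's English description precedes it below -/
import Mathlib

section
/- Let 𝒢 = (G, o, R_1, …, R_n) be a functional Menger system of rank n and let H be a nonempty subset of G. Then H is a stabilizer of 𝒢 if and only if H is a quasi-stable l-unitary normal v-complex with R_i H ⊆ H for every i ∈ {1,…,n}, and for every m ∈ ℕ the condition (A'_m) holds: for all x, y, u ∈ G, w̄ ∈ G^n, i ∈ {1,…,n}, if x = y[R_1x…R_nx], x ∈ C_H^m(H) and u[w̄|_i y] ∈ H, then u[w̄|_i x] ∈ H (and also, with the outer symbol empty, if x = y[R_1x…R_nx], x ∈ C_H^m(H) and y ∈ H then x ∈ H). -/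
universe u

/-- A functional Menger system of rank `n`: an `(n+1)`-ary operation `o`
(written `x[y₁…yₙ]` in the paper) and `n` unary operations `R i`,
satisfying axioms A1–A7. -/
structure MengerSystem (n : ℕ) (G : Type u) where
  o : G → (Fin n → G) → G
  R : Fin n → G → G
  A1 : ∀ (x : G) (y z : Fin n → G),
    o (o x y) z = o x fun i => o (y i) z
  A2 : ∀ x : G, o x (fun i => R i x) = x
  A3 : ∀ (x : G) (u : Fin n → G) (i : Fin n) (z y : G),
    o (o x (Function.update u i z)) (fun j => R j y)
      = o x (Function.update u i (o z fun j => R j y))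
  A4 : ∀ (i : Fin n) (x y : G),
    R i (o x fun j => R j y) = o (R i x) fun j => R j y
  A5 : ∀ (x y z : G),
    o (o x fun j => R j y) (fun j => R j z)
      = o (o x fun j => R j z) (fun j => R j y)
  A6 : ∀ (i k : Fin n) (x : G) (y : Fin n → G),
    R i (o x y) = R i (o (R k x) y)
  A7 : ∀ (i : Fin n) (x : G) (y : Fin n → G),
    o (R i x) y = o (y i) fun j => R j (o x y)

namespace MengerSystem

variable {n : ℕ} {G : Type u}

/-- `T_n(G)`: the least set of transformations of `G` containing the identity and
closed under `t ↦ (x ↦ a[b̄|ᵢ t x])` and `t ↦ (x ↦ Rᵢ (t x))`. -/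
inductive IsTn (M : MengerSystem n G) : (G → G) → Prop
  | id : IsTn M id
  | op (t : G → G) (a : G) (b : Fin n → G) (i : Fin n) :
      IsTn M t → IsTn M fun x => M.o a (Function.update b i (t x))
  | proj (t : G → G) (i : Fin n) :
      IsTn M t → IsTn M fun x => M.R i (t x)

/-- quasi-stable: `x ∈ H → x[x…x] ∈ H`. -/
def QuasiStable (M : MengerSystem n G) (H : Set G) : Prop :=
  ∀ x ∈ H, M.o x (fun _ => x) ∈ H

/-- l-unitary: `x[y…y] ∈ H ∧ y ∈ H → x ∈ H`. -/
def LUnitary (M : MengerSystem n G) (H : Set G) : Prop :=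
  ∀ x y : G, M.o x (fun _ => y) ∈ H → y ∈ H → x ∈ H

/-- normal v-complex: `x, y ∈ H ∧ t x ∈ H → t y ∈ H` for all `t ∈ T_n(G)`. -/
def NormalVComplex (M : MengerSystem n G) (H : Set G) : Prop :=
  ∀ t : G → G, M.IsTn t → ∀ x ∈ H, ∀ y ∈ H, t x ∈ H → t y ∈ H

/-- stable: `x, y₁, …, yₙ ∈ H → x[y₁…yₙ] ∈ H`. -/
def Stable (M : MengerSystem n G) (H : Set G) : Prop :=
  ∀ (x : G) (y : Fin n → G), x ∈ H → (∀ i, y i ∈ H) → M.o x y ∈ H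

/-- v-unitary: `x[y₁…yₙ] ∈ H ∧ y₁, …, yₙ ∈ H → x ∈ H`. -/
def VUnitary (M : MengerSystem n G) (H : Set G) : Prop :=
  ∀ (x : G) (y : Fin n → G), M.o x y ∈ H → (∀ i, y i ∈ H) → x ∈ H

/-- l-ideal: `x[y₁…yₙ] ∈ H` whenever some `yᵢ ∈ H`. -/
def LIdeal (M : MengerSystem n G) (H : Set G) : Prop :=
  ∀ (x : G) (y : Fin n → G), (∃ i, y i ∈ H) → M.o x y ∈ H

/-- the order `x ≤ y ↔ x = y[R₁x…Rₙx]` (the relation ζ). -/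
def le (M : MengerSystem n G) (x y : G) : Prop :=
  x = M.o y fun i => M.R i x

/-- the quasi-order `x ⊏ y ↔ R₁x ≤ R₁y` (the relation χ). -/
def sub (M : MengerSystem n G) [NeZero n] (x y : G) : Prop :=
  M.le (M.R 0 x) (M.R 0 y)

/-- v-regular binary relation. -/
def VRegular (M : MengerSystem n G) (ρ : G → G → Prop) : Prop :=
  ∀ (z : G) (x y : Fin n → G), (∀ i, ρ (x i) (y i)) → ρ (M.o z x) (M.o z y)

end MengerSystem

/-- An `n`-place function on `A`: a partial map from `Aⁿ` to `A`. -/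
def NPlace (n : ℕ) (A : Type u) : Type u := (Fin n → A) → Part A

namespace NPlace

variable {n : ℕ} {A : Type u}

/-- Menger composition `f[g₁…gₙ]` of `n`-place functions. -/
def comp (f : NPlace n A) (g : Fin n → NPlace n A) : NPlace n A :=
  fun a =>
    (⟨∀ i, (g i a).Dom, fun h i => (g i a).get (h i)⟩ : Part (Fin n → A)).bind f

/-- `Rᵢ f`: same domain as `f`, value `(Rᵢ f)(a₁,…,aₙ) = aᵢ`. -/
def Ri (i : Fin n) (f : NPlace n A) : NPlace n A :=
  fun a => (f a).map fun _ => a i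

/-- Set-theoretic intersection of two `n`-place functions (as sets of pairs). -/
def inter (f g : NPlace n A) : NPlace n A :=
  fun a => ⟨(f a).Dom ∧ f a = g a, fun h => (f a).get h.1⟩

end NPlace

/-- A representation of a functional Menger system by `n`-place functions. -/
def MengerSystem.IsRep {n : ℕ} {G : Type u} (M : MengerSystem n G) {A : Type u}
    (P : G → NPlace n A) : Prop :=
  (∀ (x : G) (y : Fin n → G), P (M.o x y) = NPlace.comp (P x) fun i => P (y i)) ∧
  (∀ (i : Fin n) (x : G), P (M.R i x) = NPlace.Ri i (P x))

/-- A nonempty `H ⊆ G` is a stabilizer of `M` if there are a representation `P`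
on some set `A` and a point `a ∈ A` with `H = {g | P g (a,…,a) = a}`. -/
def MengerSystem.IsStabilizer {n : ℕ} {G : Type u} (M : MengerSystem n G)
    (H : Set G) : Prop :=
  ∃ (A : Type u) (P : G → NPlace n A) (a : A),
    M.IsRep P ∧ H = {g : G | a ∈ P g fun _ => a}

/-- The operator `C_H`: `c ∈ C_H(X)` iff there are `a, b, t` with
`(a ≤ b ∨ a, b ∈ H)`, `t a ⊏ c`, `a ∈ X` and `t b ∈ X`. -/
def MengerSystem.CH {n : ℕ} {G : Type u} [NeZero n] (M : MengerSystem n G)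
    (H X : Set G) : Set G :=
  {c | ∃ (a b : G) (t : G → G), M.IsTn t ∧ (M.le a b ∨ (a ∈ H ∧ b ∈ H)) ∧
    M.sub (t a) c ∧ a ∈ X ∧ t b ∈ X}

/-- Iterates `C_H^m(X)`. -/
def MengerSystem.CHiter {n : ℕ} {G : Type u} [NeZero n] (M : MengerSystem n G)
    (H X : Set G) : ℕ → Set G
  | 0 => X
  | m + 1 => M.CH H (M.CHiter H X m)

/-- `C_H[X] = ⋃ₘ C_H^m(X)`. -/
def MengerSystem.CHcl {n : ℕ} {G : Type u} [NeZero n] (M : MengerSystem n G)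
    (H X : Set G) : Set G :=
  ⋃ m : ℕ, M.CHiter H X m

/-!
In a representation `P` with base point `a`, write `‖g‖` for the partial value `P g (a,…,a)`.
Transformations in `T_n` preserve equality of these values, `x ≤ y` forces `‖x‖ = ‖y‖` as soon
as `‖x‖` is defined, and by induction on `m` every element of `C_H^m(H)` has a defined value;
this gives the conditions.

Conversely, `W = ⋃ₘ C_H^m(H)` is closed under `C_H`. Identify two elements of `W` when no
transformation `t ∈ T_n` separates them by membership of `t x`, `t y` in `H` or in `W`, and let
`g` act on classes by `g[w̄]`, defined when `g[w̄] ∈ W`. Menger composition is respected because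
`W` is upward closed for `⊏`; the projections `Rᵢ` are respected because, by axiom A7,
`(Rᵢ x)[w̄] ≤ wᵢ`, and the conditions `(A'_m)` make `≤`-related elements of `W` equivalent.
`H` is then the stabilizer of the class of any of its elements.
-/

theorem update_induction {ι α : Type*} [Fintype ι] [DecidableEq ι] {ρ : (ι → α) → Prop}
    {v w : ι → α} (h₀ : ρ v)
    (step : ∀ u i, (∀ j, u j = v j ∨ u j = w j) → ρ u → ρ (Function.update u i (w i))) :
    ρ w := by
  suffices ∀ s : Finset ι, ρ (s.piecewise w v) by simpa using this Finset.univ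
  intro s
  induction s using Finset.induction_on with
  | empty => simpa using h₀
  | insert i s _ ih =>
    rw [Finset.piecewise_insert]
    refine step _ i (fun j => ?_) ih
    by_cases hj : j ∈ s <;> simp [hj]

namespace NPlace

variable {n : ℕ} {A : Type u}

theorem comp_congr {f : NPlace n A} {g g' : Fin n → NPlace n A} {a : Fin n → A}
    (h : ∀ i, g i a = g' i a) : comp f g a = comp f g' a :=
  congrArg (fun q : Fin n → Part A =>
    (⟨∀ i, (q i).Dom, fun hq i => (q i).get (hq i)⟩ : Part (Fin n → A)).bind f) (funext h)

theorem comp_eq_of_forall_eq_some {f : NPlace n A} {g : Fin n → NPlace n A} {a b : Fin n → A}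
    (h : ∀ i, g i a = Part.some (b i)) : comp f g a = f b := by
  have hb : (⟨∀ i, (g i a).Dom, fun hd i => (g i a).get (hd i)⟩ : Part (Fin n → A))
      = Part.some b :=
    Part.eq_some_iff.2 ⟨fun i => by simp [h i], funext fun i => by simp [h i]⟩
  rw [comp, hb]
  exact Part.bind_some b f

theorem dom_of_comp_dom {f : NPlace n A} {g : Fin n → NPlace n A} {a : Fin n → A}
    (hd : (comp f g a).Dom) (i : Fin n) : (g i a).Dom :=
  (Part.bind_dom.1 hd).1 i

end NPlace

namespace MengerSystem

variable {n : ℕ} {G : Type u} (M : MengerSystem n G)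

theorem R_R (i k : Fin n) (x : G) : M.R i (M.R k x) = M.R i x := by
  have h := M.A6 i k x (fun j => M.R j x)
  rwa [M.A2, ← M.A4, M.A2, eq_comm] at h

theorem le_refl (x : G) : M.le x x := (M.A2 x).symm

theorem le_R (i : Fin n) {x y : G} (h : M.le x y) : M.le (M.R i x) (M.R i y) := by
  unfold le at *
  simp only [R_R]
  conv_lhs => rw [h]
  exact M.A4 i y x

theorem le_o_R (z w : G) : M.le (M.o z fun j => M.R j w) z := by
  unfold le
  simp only [M.A4]
  rw [← M.A1, M.A2]

theorem le_o_update {p q : G} (h : M.le p q) (a : G) (b : Fin n → G) (i : Fin n) :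
    M.le (M.o a (Function.update b i p)) (M.o a (Function.update b i q)) := by
  set c := M.o a (Function.update b i p) with hc
  have hcp : M.o c (fun j => M.R j p) = c := by rw [hc, M.A3, M.A2]
  have hqc : M.o q (fun j => M.R j c) = M.o p (fun j => M.R j c) :=
    calc M.o q (fun j => M.R j c)
        = M.o (M.o q fun j => M.R j c) (fun j => M.R j p) := by
          simp only [M.A1, ← M.A4, hcp]
      _ = M.o (M.o q fun j => M.R j p) (fun j => M.R j c) := M.A5 q c p
      _ = M.o p (fun j => M.R j c) := by rw [← h]
  show c = _
  calc c = M.o c (fun j => M.R j c) := (M.A2 c).symm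
    _ = M.o a (fun j => M.o (Function.update b i p j) fun k => M.R k c) := M.A1 _ _ _
    _ = M.o a (fun j => M.o (Function.update b i q j) fun k => M.R k c) := by
      congr 1
      funext j
      rcases eq_or_ne j i with rfl | hj
      · simp only [Function.update_self, hqc]
      · simp only [Function.update_of_ne hj]
    _ = M.o (M.o a (Function.update b i q)) (fun j => M.R j c) := (M.A1 _ _ _).symm

theorem le_Tn {x y : G} (h : M.le x y) {t : G → G} (ht : M.IsTn t) : M.le (t x) (t y) := by
  induction ht with
  | id => exact h
  | op t a b i _ ih => exact M.le_o_update ih a b i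
  | proj t i _ ih => exact M.le_R i ih

variable {M}

theorem IsTn.comp {t s : G → G} (ht : M.IsTn t) (hs : M.IsTn s) : M.IsTn (t ∘ s) := by
  induction ht with
  | id => exact hs
  | op t a b i _ ih => exact IsTn.op _ a b i ih
  | proj t i _ ih => exact IsTn.proj _ i ih

theorem IsTn.slot (a : G) (b : Fin n → G) (i : Fin n) :
    M.IsTn fun z => M.o a (Function.update b i z) :=
  IsTn.op _root_.id a b i IsTn.id

theorem NormalVComplex.o_const_mem {H : Set G} (hNV : M.NormalVComplex H) {g h : G}
    {v : Fin n → G} (hv : ∀ j, v j ∈ H) (hh : h ∈ H) (hg : M.o g v ∈ H) :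
    M.o g (fun _ => h) ∈ H := by
  refine update_induction (ρ := fun u => M.o g u ∈ H) hg fun u i hu hgu => ?_
  have hui : u i ∈ H := by rcases hu i with e | e <;> rw [e]; exacts [hv i, hh]
  refine hNV _ (IsTn.slot g u i) (u i) hui h hh ?_
  simpa only [Function.update_eq_self] using hgu

theorem NormalVComplex.mem_of_le {H : Set G} (hNV : M.NormalVComplex H) (hLU : M.LUnitary H)
    (hR : ∀ i : Fin n, ∀ x ∈ H, M.R i x ∈ H) {x z : G} (hxz : M.le x z) (hx : x ∈ H) :
    z ∈ H := by
  have hzx : M.o z (fun j => M.R j x) ∈ H := by rwa [← hxz]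
  exact hLU z x (hNV.o_const_mem (fun j => hR j x hx) hx hzx) hx

theorem o_const_mem_iff {H : Set G} (hQS : M.QuasiStable H) (hLU : M.LUnitary H)
    (hNV : M.NormalVComplex H) {g h : G} (hh : h ∈ H) : M.o g (fun _ => h) ∈ H ↔ g ∈ H :=
  ⟨fun hgh => hLU g h hgh hh, fun hg => hNV.o_const_mem (fun _ => hg) hh (hQS g hg)⟩

variable (M)

section

variable [NeZero n]

theorem sub_of_le {x y : G} (h : M.le x y) : M.sub x y := M.le_R 0 h

theorem sub_refl (x : G) : M.sub x x := M.le_refl _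

theorem sub_of_R_zero_eq {x y : G} (h : M.R 0 x = M.R 0 y) : M.sub x y := by
  unfold sub
  rw [h]
  exact M.le_refl _

theorem sub_o_arg (a : G) (z : Fin n → G) (j : Fin n) : M.sub (M.o a z) (z j) := by
  unfold sub le
  simp only [R_R]
  calc M.R 0 (M.o a z)
      = M.R 0 (M.o (M.R j a) z) := M.A6 0 j a z
    _ = M.R 0 (M.o (z j) fun k => M.R k (M.o a z)) := by rw [M.A7]
    _ = M.o (M.R 0 (z j)) fun k => M.R k (M.o a z) := M.A4 0 (z j) (M.o a z)

variable (H : Set G)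

theorem subset_CH (X : Set G) : X ⊆ M.CH H X := fun c hc =>
  ⟨c, c, id, IsTn.id, Or.inl (M.le_refl c), M.sub_refl c, hc, hc⟩

theorem CHiter_monotone (X : Set G) : Monotone (M.CHiter H X) :=
  monotone_nat_of_le_succ fun _ => M.subset_CH H _

theorem subset_CHcl : H ⊆ M.CHcl H H := fun _ hg => Set.mem_iUnion.2 ⟨0, hg⟩

theorem CH_CHcl_subset : M.CH H (M.CHcl H H) ⊆ M.CHcl H H := by
  rintro c ⟨a, b, t, ht, hab, hsub, ha, htb⟩
  obtain ⟨m₁, ha⟩ := Set.mem_iUnion.1 ha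
  obtain ⟨m₂, htb⟩ := Set.mem_iUnion.1 htb
  have hmono := M.CHiter_monotone H H
  exact Set.mem_iUnion.2 ⟨max m₁ m₂ + 1, a, b, t, ht, hab, hsub,
    hmono (le_max_left _ _) ha, hmono (le_max_right _ _) htb⟩

theorem mem_CHcl_of_sub {g c : G} (hg : g ∈ M.CHcl H H) (h : M.sub g c) : c ∈ M.CHcl H H :=
  M.CH_CHcl_subset H ⟨g, g, id, IsTn.id, Or.inl (M.le_refl g), h, hg, hg⟩

theorem apply_mem_CHcl {a b : G} {t : G → G} (ht : M.IsTn t) (hab : M.le a b ∨ (a ∈ H ∧ b ∈ H))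
    (ha : a ∈ M.CHcl H H) (htb : t b ∈ M.CHcl H H) : t a ∈ M.CHcl H H :=
  M.CH_CHcl_subset H ⟨a, b, t, ht, hab, M.sub_refl _, ha, htb⟩

theorem Tn_mem_of_le
    (hA : ∀ (m : ℕ) (x y u : G) (w : Fin n → G) (i : Fin n),
      x = M.o y (fun j => M.R j x) → x ∈ M.CHiter H H m →
      M.o u (Function.update w i y) ∈ H → M.o u (Function.update w i x) ∈ H)
    (hA' : ∀ (m : ℕ) (x y : G), x = M.o y (fun j => M.R j x) →
      x ∈ M.CHiter H H m → y ∈ H → x ∈ H)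
    {x y : G} (hxy : M.le x y) (hx : x ∈ M.CHcl H H) {t : G → G} (ht : M.IsTn t)
    (hty : t y ∈ H) : t x ∈ H := by
  have htx : t x ∈ M.CHcl H H := M.apply_mem_CHcl H ht (Or.inl hxy) hx (M.subset_CHcl H hty)
  cases ht with
  | id =>
    obtain ⟨m, hm⟩ := Set.mem_iUnion.1 htx
    exact hA' m x y hxy hm hty
  | op t a b i ht =>
    have ht'x : t x ∈ M.CHcl H H := by
      simpa using M.mem_CHcl_of_sub H htx (M.sub_o_arg a (Function.update b i (t x)) i)
    obtain ⟨m, hm⟩ := Set.mem_iUnion.1 ht'x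
    exact hA m _ _ a b i (M.le_Tn hxy ht) hm hty
  | proj t i ht =>
    obtain ⟨m, hm⟩ := Set.mem_iUnion.1 htx
    exact hA' m _ _ (M.le_R i (M.le_Tn hxy ht)) hm hty

def ctxEquiv (x y : G) : Prop :=
  ∀ t : G → G, M.IsTn t → (t x ∈ H ↔ t y ∈ H) ∧ (t x ∈ M.CHcl H H ↔ t y ∈ M.CHcl H H)

theorem ctxEquiv_equivalence : Equivalence (M.ctxEquiv H) where
  refl _ _ _ := ⟨Iff.rfl, Iff.rfl⟩
  symm h t ht := ⟨(h t ht).1.symm, (h t ht).2.symm⟩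
  trans h₁ h₂ t ht := ⟨(h₁ t ht).1.trans (h₂ t ht).1, (h₁ t ht).2.trans (h₂ t ht).2⟩

theorem ctxEquiv_of_mem (hNV : M.NormalVComplex H) {x y : G} (hx : x ∈ H) (hy : y ∈ H) :
    M.ctxEquiv H x y := fun t ht =>
  ⟨⟨hNV t ht x hx y hy, hNV t ht y hy x hx⟩,
    ⟨M.apply_mem_CHcl H ht (Or.inr ⟨hy, hx⟩) (M.subset_CHcl H hy),
      M.apply_mem_CHcl H ht (Or.inr ⟨hx, hy⟩) (M.subset_CHcl H hx)⟩⟩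

theorem ctxEquiv_of_le (hLU : M.LUnitary H) (hNV : M.NormalVComplex H)
    (hR : ∀ i : Fin n, ∀ x ∈ H, M.R i x ∈ H)
    (hA : ∀ (m : ℕ) (x y u : G) (w : Fin n → G) (i : Fin n),
      x = M.o y (fun j => M.R j x) → x ∈ M.CHiter H H m →
      M.o u (Function.update w i y) ∈ H → M.o u (Function.update w i x) ∈ H)
    (hA' : ∀ (m : ℕ) (x y : G), x = M.o y (fun j => M.R j x) →
      x ∈ M.CHiter H H m → y ∈ H → x ∈ H)
    {x y : G} (hxy : M.le x y) (hx : x ∈ M.CHcl H H) : M.ctxEquiv H x y := fun _ ht =>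
  ⟨⟨hNV.mem_of_le hLU hR (M.le_Tn hxy ht), M.Tn_mem_of_le H hA hA' hxy hx ht⟩,
    ⟨fun h => M.mem_CHcl_of_sub H h (M.sub_of_le (M.le_Tn hxy ht)),
      M.apply_mem_CHcl H ht (Or.inl hxy) hx⟩⟩

theorem ctxEquiv_o_update {x x' : G} (h : M.ctxEquiv H x x') (a : G) (b : Fin n → G)
    (i : Fin n) :
    M.ctxEquiv H (M.o a (Function.update b i x)) (M.o a (Function.update b i x')) :=
  fun _ ht => h _ (ht.comp (IsTn.slot a b i))

theorem ctxEquiv_o_congr {h h' : Fin n → G} (hh : ∀ j, M.ctxEquiv H (h j) (h' j)) (g : G) :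
    M.ctxEquiv H (M.o g h) (M.o g h') := by
  have heqv := M.ctxEquiv_equivalence H
  refine update_induction (ρ := fun u => M.ctxEquiv H (M.o g h) (M.o g u)) (heqv.refl _)
    fun u i hu hgu => heqv.trans hgu ?_
  have hui : M.ctxEquiv H (u i) (h' i) := by
    rcases hu i with e | e <;> rw [e]; exacts [hh i, heqv.refl _]
  simpa only [Function.update_eq_self] using M.ctxEquiv_o_update H hui g u i

def ctxSetoid : Setoid (M.CHcl H H) where
  r x y := M.ctxEquiv H x y
  iseqv := ⟨fun x => (M.ctxEquiv_equivalence H).refl x, (M.ctxEquiv_equivalence H).symm,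
    (M.ctxEquiv_equivalence H).trans⟩

def classOf (z : G) : Part (Quotient (M.ctxSetoid H)) :=
  ⟨z ∈ M.CHcl H H, fun hz => Quotient.mk _ ⟨z, hz⟩⟩

theorem classOf_of_mem {z : G} (hz : z ∈ M.CHcl H H) :
    M.classOf H z = Part.some (Quotient.mk _ ⟨z, hz⟩) :=
  Part.eq_some_iff.2 ⟨hz, rfl⟩

theorem classOf_congr {z z' : G} (h : M.ctxEquiv H z z') : M.classOf H z = M.classOf H z' :=
  Part.ext' (h id IsTn.id).2 fun _ _ => Quotient.sound h

def quotRep (g : G) : NPlace n (Quotient (M.ctxSetoid H)) := fun p =>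
  Quotient.finLiftOn p (fun w => M.classOf H (M.o g fun i => (w i).1))
    fun _ _ hw => M.classOf_congr H (M.ctxEquiv_o_congr H hw g)

theorem quotRep_mk (g : G) (w : Fin n → M.CHcl H H) :
    M.quotRep H g (fun i => Quotient.mk _ (w i)) = M.classOf H (M.o g fun i => (w i).1) := by
  unfold quotRep
  rw [Quotient.finLiftOn_mk]

theorem exists_eq_mk (p : Fin n → Quotient (M.ctxSetoid H)) :
    ∃ w : Fin n → M.CHcl H H, p = fun i => Quotient.mk _ (w i) :=
  ⟨fun i => (p i).out, funext fun i => (Quotient.out_eq (p i)).symm⟩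

theorem quotRep_o (x : G) (y : Fin n → G) :
    M.quotRep H (M.o x y) = NPlace.comp (M.quotRep H x) fun i => M.quotRep H (y i) := by
  funext p
  obtain ⟨w, rfl⟩ := M.exists_eq_mk H p
  rw [quotRep_mk, M.A1]
  by_cases hW : ∀ i, M.o (y i) (fun j => (w j).1) ∈ M.CHcl H H
  · rw [NPlace.comp_eq_of_forall_eq_some (b := fun i => Quotient.mk _ ⟨_, hW i⟩)
      fun i => by rw [quotRep_mk, classOf_of_mem], quotRep_mk]
  · push Not at hW
    obtain ⟨i, hi⟩ := hW
    refine Part.ext' (iff_of_false (fun h => hi ?_) fun hd => hi ?_) fun h => absurd h ?_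
    · exact M.mem_CHcl_of_sub H h (M.sub_o_arg _ _ i)
    · have hyi := NPlace.dom_of_comp_dom hd i
      rw [quotRep_mk] at hyi
      exact hyi
    · exact fun h => hi (M.mem_CHcl_of_sub H h (M.sub_o_arg _ _ i))

theorem quotRep_R (hle : ∀ x y, M.le x y → x ∈ M.CHcl H H → M.ctxEquiv H x y)
    (i : Fin n) (x : G) : M.quotRep H (M.R i x) = NPlace.Ri i (M.quotRep H x) := by
  funext p
  obtain ⟨w, rfl⟩ := M.exists_eq_mk H p
  rw [quotRep_mk, NPlace.Ri, quotRep_mk]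
  have hR0 := M.A6 0 i x fun j => (w j).1
  refine Part.ext' ⟨fun h => M.mem_CHcl_of_sub H h (M.sub_of_R_zero_eq hR0.symm),
    fun h => M.mem_CHcl_of_sub H h (M.sub_of_R_zero_eq hR0)⟩ fun hd _ => Quotient.sound ?_
  show M.ctxEquiv H (M.o (M.R i x) fun j => (w j).1) (w i).1
  have h7 := M.A7 i x fun j => (w j).1
  rw [h7] at hd ⊢
  exact hle _ _ (M.le_o_R _ _) hd

theorem quotRep_isRep (hle : ∀ x y, M.le x y → x ∈ M.CHcl H H → M.ctxEquiv H x y) :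
    M.IsRep (M.quotRep H) :=
  ⟨M.quotRep_o H, M.quotRep_R H hle⟩

theorem mem_quotRep_const_iff (hQS : M.QuasiStable H) (hLU : M.LUnitary H)
    (hNV : M.NormalVComplex H) {h₀ : G} (h₀H : h₀ ∈ H) (g : G) :
    Quotient.mk _ ⟨h₀, M.subset_CHcl H h₀H⟩ ∈
      M.quotRep H g (fun _ => Quotient.mk _ ⟨h₀, M.subset_CHcl H h₀H⟩) ↔ g ∈ H := by
  rw [quotRep_mk, ← o_const_mem_iff hQS hLU hNV h₀H, classOf, Part.mem_mk_iff]
  constructor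
  · rintro ⟨_, hz⟩
    exact ((Quotient.exact hz : M.ctxEquiv H _ _) id IsTn.id).1.2 h₀H
  · exact fun hz => ⟨M.subset_CHcl H hz, Quotient.sound (M.ctxEquiv_of_mem H hNV hz h₀H)⟩

end

namespace IsRep

variable {M} {A : Type u} {P : G → NPlace n A} {pt : A}

theorem Tn_congr (hP : M.IsRep P) {x y : G} (h : P x (fun _ => pt) = P y (fun _ => pt))
    {t : G → G} (ht : M.IsTn t) : P (t x) (fun _ => pt) = P (t y) (fun _ => pt) := by
  induction ht with
  | id => exact h
  | op t a b i _ ih =>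
    rw [hP.1, hP.1]
    refine NPlace.comp_congr fun j => ?_
    rcases eq_or_ne j i with rfl | hj
    · simpa only [Function.update_self] using ih
    · simp only [Function.update_of_ne hj]
  | proj t i _ ih => rw [hP.2, hP.2, NPlace.Ri, NPlace.Ri, ih]

theorem eq_of_le (hP : M.IsRep P) {x y : G} (hxy : M.le x y) (hx : (P x fun _ => pt).Dom) :
    P x (fun _ => pt) = P y (fun _ => pt) := by
  have hR : ∀ i, P (M.R i x) (fun _ => pt) = Part.some pt := fun i => by
    rw [hP.2, NPlace.Ri, ← Part.some_get hx, Part.map_some]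
  calc P x (fun _ => pt)
      = P (M.o y fun i => M.R i x) (fun _ => pt) := by rw [← hxy]
    _ = P y (fun _ => pt) := by rw [hP.1]; exact NPlace.comp_eq_of_forall_eq_some hR

theorem dom_of_sub [NeZero n] (hP : M.IsRep P) {x y : G} (hxy : M.sub x y)
    (hx : (P x fun _ => pt).Dom) : (P y fun _ => pt).Dom := by
  have hRx : (P (M.R 0 x) fun _ => pt).Dom := by rw [hP.2]; exact hx
  have hRy : (P (M.R 0 y) fun _ => pt).Dom := hP.eq_of_le hxy hRx ▸ hRx
  rw [hP.2] at hRy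
  exact hRy

theorem o_const_eq (hP : M.IsRep P) {y : G} (hy : P y (fun _ => pt) = Part.some pt) (x : G) :
    P (M.o x fun _ => y) (fun _ => pt) = P x (fun _ => pt) := by
  rw [hP.1]
  exact NPlace.comp_eq_of_forall_eq_some fun _ => hy

theorem dom_of_mem_CHiter [NeZero n] (hP : M.IsRep P) (m : ℕ) {c : G}
    (hc : c ∈ M.CHiter {g | pt ∈ P g fun _ => pt} {g | pt ∈ P g fun _ => pt} m) :
    (P c fun _ => pt).Dom := by
  induction m generalizing c with
  | zero => exact Part.dom_iff_mem.2 ⟨pt, hc⟩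
  | succ m ih =>
    obtain ⟨a, b, t, ht, hab, hsub, ha, htb⟩ := hc
    have hab' : P a (fun _ => pt) = P b (fun _ => pt) := by
      rcases hab with hle | ⟨haH, hbH⟩
      · exact hP.eq_of_le hle (ih ha)
      · exact (Part.eq_some_iff.2 haH).trans (Part.eq_some_iff.2 hbH).symm
    have hta : (P (t a) fun _ => pt).Dom := by
      rw [hP.Tn_congr hab' ht]
      exact ih htb
    exact hP.dom_of_sub hsub hta

theorem quasiStable (hP : M.IsRep P) : M.QuasiStable {g | pt ∈ P g fun _ => pt} :=
  fun x hx => by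
    rw [Set.mem_ofPred_eq, hP.o_const_eq (Part.eq_some_iff.2 hx)]
    exact hx

theorem lUnitary (hP : M.IsRep P) : M.LUnitary {g | pt ∈ P g fun _ => pt} :=
  fun x _ hxy hy => by rwa [Set.mem_ofPred_eq, hP.o_const_eq (Part.eq_some_iff.2 hy)] at hxy

theorem normalVComplex (hP : M.IsRep P) : M.NormalVComplex {g | pt ∈ P g fun _ => pt} :=
  fun _ ht _ hx _ hy htx => by
    rwa [Set.mem_ofPred_eq,
      ← hP.Tn_congr ((Part.eq_some_iff.2 hx).trans (Part.eq_some_iff.2 hy).symm) ht]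

theorem R_mem (hP : M.IsRep P) (i : Fin n) :
    ∀ x ∈ {g | pt ∈ P g fun _ => pt}, M.R i x ∈ {g | pt ∈ P g fun _ => pt} :=
  fun x hx => by
    rw [Set.mem_ofPred_eq, hP.2]
    exact Part.mem_map _ hx

theorem o_update_mem_of_le [NeZero n] (hP : M.IsRep P) {m : ℕ} {x y u : G} {w : Fin n → G}
    {i : Fin n} (hxy : M.le x y)
    (hx : x ∈ M.CHiter {g | pt ∈ P g fun _ => pt} {g | pt ∈ P g fun _ => pt} m)
    (hy : M.o u (Function.update w i y) ∈ {g | pt ∈ P g fun _ => pt}) :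
    M.o u (Function.update w i x) ∈ {g | pt ∈ P g fun _ => pt} := by
  rwa [Set.mem_ofPred_eq,
    hP.Tn_congr (hP.eq_of_le hxy (hP.dom_of_mem_CHiter m hx)) (IsTn.slot u w i)]

theorem mem_of_le [NeZero n] (hP : M.IsRep P) {m : ℕ} {x y : G} (hxy : M.le x y)
    (hx : x ∈ M.CHiter {g | pt ∈ P g fun _ => pt} {g | pt ∈ P g fun _ => pt} m)
    (hy : y ∈ {g | pt ∈ P g fun _ => pt}) : x ∈ {g | pt ∈ P g fun _ => pt} := by
  rwa [Set.mem_ofPred_eq, hP.eq_of_le hxy (hP.dom_of_mem_CHiter m hx)]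

end IsRep

end MengerSystem

/-- **Theorem 3.** A nonempty `H ⊆ G` is a stabilizer of a functional Menger
system of rank `n` iff it is a quasi-stable l-unitary normal v-complex with
`Rᵢ H ⊆ H` satisfying the system of conditions `(A'_m)` for every `m ∈ ℕ`. -/
theorem stabilizer_iff_CHiter {n : ℕ} {G : Type u} [NeZero n] (M : MengerSystem n G)
    (H : Set G) (hH : H.Nonempty) :
    M.IsStabilizer H ↔
      (M.QuasiStable H ∧ M.LUnitary H ∧ M.NormalVComplex H ∧
        (∀ i : Fin n, ∀ x ∈ H, M.R i x ∈ H) ∧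
        (∀ (m : ℕ) (x y u : G) (w : Fin n → G) (i : Fin n),
          x = M.o y (fun j => M.R j x) → x ∈ M.CHiter H H m →
          M.o u (Function.update w i y) ∈ H →
          M.o u (Function.update w i x) ∈ H) ∧
        (∀ (m : ℕ) (x y : G), x = M.o y (fun j => M.R j x) →
          x ∈ M.CHiter H H m → y ∈ H → x ∈ H)) := by
  constructor
  · rintro ⟨A, P, pt, hP, rfl⟩
    exact ⟨hP.quasiStable, hP.lUnitary, hP.normalVComplex, hP.R_mem,
      fun _ _ _ _ _ _ => hP.o_update_mem_of_le, fun _ _ _ => hP.mem_of_le⟩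
  · rintro ⟨hQS, hLU, hNV, hR, hA, hA'⟩
    obtain ⟨h₀, h₀H⟩ := hH
    exact ⟨_, M.quotRep H, Quotient.mk _ ⟨h₀, M.subset_CHcl H h₀H⟩,
      M.quotRep_isRep H fun _ _ => M.ctxEquiv_of_le H hLU hNV hR hA hA',
      Set.ext fun g => (M.mem_quotRep_const_iff H hQS hLU hNV h₀H g).symm⟩
end

section
/- Let Φ be a set of n-place functions on a set A closed under Menger composition and under each operation R_i, let a ∈ A, and let f, g, α ∈ Φ, ω_1,…,ω_n ∈ Φ, i ∈ {1,…,n}. If f = g[R_1 f … R_n f] and (a,…,a) ∈ dom f, and α[ω_1…ω_{i−1} g ω_{i+1}…ω_n] ∈ H^a_Φ, then α[ω_1…ω_{i−1} f ω_{i+1}…ω_n] ∈ H^a_Φ. Moreover, under the same hypotheses on f and g, if g ∈ H^a_Φ then f ∈ H^a_Φ. -/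
universe u

namespace NPlace

variable {n : ℕ} {A : Type u}

/-- The stabilizer `H^a_Φ = {f ∈ Φ : f(a,…,a) = a}`. -/
def stab (Φ : Set (NPlace n A)) (a : A) : Set (NPlace n A) :=
  {f | f ∈ Φ ∧ a ∈ f fun _ => a}

/-- `U^a_Φ = {f ∈ Φ : (a,…,a) ∈ dom f}`. -/
def ustab (Φ : Set (NPlace n A)) (a : A) : Set (NPlace n A) :=
  {f | f ∈ Φ ∧ (f fun _ => a).Dom}

end NPlace

/-! Since `f = g[R₁f…Rₙf]`, the function `f` agrees with `g` wherever `f` is defined, in particular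
at `(a,…,a)`. A Menger composition evaluated at a point only sees the values of the inner
functions at that point, so putting `f` instead of `g` in the `i`-th slot does not change the
value of `α[ω₁…ωₙ]` at `(a,…,a)`. -/

namespace NPlace

variable {n : ℕ} {A : Type u}

theorem comp_apply_congr (f : NPlace n A) {g g' : Fin n → NPlace n A} {x : Fin n → A}
    (h : ∀ j, g j x = g' j x) : comp f g x = comp f g' x := by
  unfold comp
  congr 1
  exact Part.ext' (forall_congr' fun j => by rw [h j])
    fun _ _ => funext fun j => by simp only [h j]

theorem comp_update_apply_congr (α : NPlace n A) (ω : Fin n → NPlace n A) (i : Fin n)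
    {f g : NPlace n A} {x : Fin n → A} (h : f x = g x) :
    comp α (Function.update ω i f) x = comp α (Function.update ω i g) x :=
  comp_apply_congr α fun j => by
    rcases eq_or_ne j i with rfl | hj
    · simpa using h
    · simp [Function.update_of_ne hj]

theorem comp_Ri_apply {f g : NPlace n A} {x : Fin n → A} (hx : (f x).Dom) :
    comp g (fun j => Ri j f) x = g x := by
  have hargs : (⟨∀ j, (Ri j f x).Dom, fun h j => (Ri j f x).get (h j)⟩ : Part (Fin n → A))
      = Part.some x :=
    Part.ext' (by simp [Ri, hx]) fun _ _ => rfl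
  exact (congrArg (Part.bind · g) hargs).trans (Part.bind_some x g)

theorem apply_eq_of_eq_comp_Ri {f g : NPlace n A} (heq : f = comp g fun j => Ri j f)
    {x : Fin n → A} (hx : (f x).Dom) : f x = g x := by
  rw [heq]
  exact comp_Ri_apply hx

end NPlace

theorem stab_restriction_general {n : ℕ} {A : Type u} (Φ : Set (NPlace n A))
    (hcomp : ∀ f ∈ Φ, ∀ g : Fin n → NPlace n A, (∀ i, g i ∈ Φ) →
      NPlace.comp f g ∈ Φ)
    (a : A) (f g α : NPlace n A) (ω : Fin n → NPlace n A) (i : Fin n)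
    (hf : f ∈ Φ) (hα : α ∈ Φ) (hω : ∀ j, ω j ∈ Φ)
    (heq : f = NPlace.comp g fun j => NPlace.Ri j f)
    (hdom : (f fun _ => a).Dom) :
    (NPlace.comp α (Function.update ω i g) ∈ NPlace.stab Φ a →
      NPlace.comp α (Function.update ω i f) ∈ NPlace.stab Φ a) ∧
    (g ∈ NPlace.stab Φ a → f ∈ NPlace.stab Φ a) := by
  have hfg : (f fun _ => a) = g fun _ => a := NPlace.apply_eq_of_eq_comp_Ri heq hdom
  have hupdate : ∀ j, Function.update ω i f j ∈ Φ :=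
    (Function.forall_update_iff ω fun _ φ => φ ∈ Φ).2 ⟨hf, fun j _ => hω j⟩
  refine ⟨fun ⟨_, hval⟩ => ⟨hcomp α hα _ hupdate, ?_⟩, fun ⟨_, hval⟩ => ⟨hf, hfg ▸ hval⟩⟩
  rw [NPlace.comp_update_apply_congr α ω i hfg]
  exact hval

/-- If `f = g[R₁f…Rₙf]` and `(a,…,a) ∈ dom f`, then
`α[ω̄|ᵢ g] ∈ H^a_Φ → α[ω̄|ᵢ f] ∈ H^a_Φ`; moreover `g ∈ H^a_Φ → f ∈ H^a_Φ`. -/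
theorem stab_restriction {n : ℕ} {A : Type u} (Φ : Set (NPlace n A))
    (hcomp : ∀ f ∈ Φ, ∀ g : Fin n → NPlace n A, (∀ i, g i ∈ Φ) →
      NPlace.comp f g ∈ Φ)
    (hR : ∀ i : Fin n, ∀ f ∈ Φ, NPlace.Ri i f ∈ Φ)
    (a : A) (f g α : NPlace n A) (ω : Fin n → NPlace n A) (i : Fin n)
    (hf : f ∈ Φ) (hg : g ∈ Φ) (hα : α ∈ Φ) (hω : ∀ j, ω j ∈ Φ)
    (heq : f = NPlace.comp g fun j => NPlace.Ri j f)
    (hdom : (f fun _ => a).Dom) :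
    (NPlace.comp α (Function.update ω i g) ∈ NPlace.stab Φ a →
      NPlace.comp α (Function.update ω i f) ∈ NPlace.stab Φ a) ∧
    (g ∈ NPlace.stab Φ a → f ∈ NPlace.stab Φ a) :=
  stab_restriction_general Φ hcomp a f g α ω i hf hα hω heq hdom
end
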